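/- For 0 ≤ β < 1, (1/π⁴)∫_{ℝ³} |(1+β)r² + (1−β)t² + 1 + i(s − 2(1−β)rt)|^{−4} ds dr dt = 1/(4π²√(1−β²)). -/

import Mathlib

open MeasureTheory Real Complex Filter Set

lemma tendsto_div_one_add_sq_atTop :
    Tendsto (fun x : ℝ => x / (1 + x ^ 2)) atTop (nhds 0) := by
  have h1 : Tendsto (fun x : ℝ => x⁻¹ + x) atTop atTop :=
    Tendsto.zero_eventuallyLE_add_atTop (by
      filter_upwards [eventually_gt_atTop (0:ℝ)] with x hx; positivity) tendsto_id
  apply h1.inv_tendsto_atTop.congr'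
  filter_upwards [eventually_gt_atTop (0:ℝ)] with x hx
  simp only [Pi.inv_apply]
  rw [show x⁻¹ + x = (1 + x ^ 2) / x by field_simp, inv_div]

lemma tendsto_div_one_add_sq_atBot :
    Tendsto (fun x : ℝ => x / (1 + x ^ 2)) atBot (nhds 0) := by
  have h := (tendsto_div_one_add_sq_atTop.comp tendsto_neg_atBot_atTop).neg
  simp only [Function.comp] at h
  rw [neg_zero] at h
  apply h.congr
  intro x
  rw [neg_pow, neg_div]
  ring_nf

lemma integrable_inv_one_add_sq_pow {n : ℕ} (hn : 1 ≤ n) :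
    Integrable fun x : ℝ => ((1 + x ^ 2) ^ n)⁻¹ := by
  refine integrable_inv_one_add_sq.mono ?_ ?_
  · exact (Continuous.inv₀ (by continuity) (fun x => by positivity)).aestronglyMeasurable
  · filter_upwards with x
    have h1 : (1:ℝ) ≤ 1 + x ^ 2 := by nlinarith [sq_nonneg x]
    rw [Real.norm_eq_abs, Real.norm_eq_abs, abs_of_pos (by positivity),
      abs_of_pos (by positivity)]
    apply inv_anti₀ (by positivity)
    calc (1:ℝ) + x ^ 2 = (1 + x ^ 2) ^ 1 := (pow_one _).symm
      _ ≤ (1 + x ^ 2) ^ n := pow_le_pow_right₀ h1 hn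

lemma integral_inv_one_add_sq_sq : (∫ x : ℝ, ((1 + x ^ 2) ^ 2)⁻¹) = π / 2 := by
  have hd : ∀ x : ℝ, HasDerivAt (fun y : ℝ => (y / (1 + y ^ 2) + Real.arctan y) / 2)
      (((1 + x ^ 2) ^ 2)⁻¹) x := by
    intro x
    have h1 : HasDerivAt (fun y : ℝ => y / (1 + y ^ 2))
        ((1 * (1 + x ^ 2) - x * (0 + 2 * x ^ 1)) / (1 + x ^ 2) ^ 2) x :=
      (hasDerivAt_id x).div ((hasDerivAt_const x (1:ℝ)).add (hasDerivAt_pow 2 x))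
        (by positivity)
    have h3 := (h1.add (Real.hasDerivAt_arctan x)).div_const 2
    convert h3 using 1
    all_goals try rfl
    have hx : (0:ℝ) < 1 + x ^ 2 := by positivity
    field_simp
    ring
  have htop : Tendsto (fun y : ℝ => (y / (1 + y ^ 2) + Real.arctan y) / 2) atTop
      (nhds ((0 + π / 2) / 2)) :=
    (tendsto_div_one_add_sq_atTop.add
      (tendsto_nhds_of_tendsto_nhdsWithin tendsto_arctan_atTop)).div_const 2
  have hbot : Tendsto (fun y : ℝ => (y / (1 + y ^ 2) + Real.arctan y) / 2) atBot
      (nhds ((0 + -(π / 2)) / 2)) :=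
    (tendsto_div_one_add_sq_atBot.add
      (tendsto_nhds_of_tendsto_nhdsWithin tendsto_arctan_atBot)).div_const 2
  rw [integral_of_hasDerivAt_of_tendsto hd (integrable_inv_one_add_sq_pow one_le_two) hbot htop]
  ring

lemma integral_lorentz_sq (a b : ℝ) (ha : 0 < a) :
    (∫ s : ℝ, ((a ^ 2 + (s - b) ^ 2) ^ 2)⁻¹) = π / (2 * a ^ 3) := by
  rw [integral_sub_right_eq_self (fun s => ((a ^ 2 + s ^ 2) ^ 2)⁻¹) b]
  have h : ∀ s : ℝ, ((a ^ 2 + s ^ 2) ^ 2)⁻¹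
      = (a ^ 4)⁻¹ * (fun y : ℝ => ((1 + y ^ 2) ^ 2)⁻¹) (s / a) := by
    intro s
    simp only
    rw [← mul_inv]
    congr 1
    field_simp
  simp_rw [h]
  rw [integral_const_mul, Measure.integral_comp_div (fun y : ℝ => ((1 + y ^ 2) ^ 2)⁻¹) a,
    integral_inv_one_add_sq_sq, abs_of_pos ha, smul_eq_mul]
  field_simp

lemma integrable_lorentz_sq (a b : ℝ) (ha : 0 < a) :
    Integrable fun s : ℝ => ((a ^ 2 + (s - b) ^ 2) ^ 2)⁻¹ := by
  have h : ∀ s : ℝ, ((a ^ 2 + (s - b) ^ 2) ^ 2)⁻¹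
      = (a ^ 4)⁻¹ * (fun y : ℝ => ((1 + y ^ 2) ^ 2)⁻¹) ((s - b) / a) := by
    intro s
    simp only
    rw [← mul_inv]
    congr 1
    field_simp
  simp_rw [h]
  exact (((integrable_inv_one_add_sq_pow one_le_two).comp_div ha.ne').comp_sub_right b).const_mul _

lemma integrable_inv_cube_prod :
    Integrable fun p : ℝ × ℝ => ((p.1 ^ 2 + p.2 ^ 2 + 1) ^ 3)⁻¹ := by
  have hb : Integrable (fun p : ℝ × ℝ => (1 + p.1 ^ 2)⁻¹ * (1 + p.2 ^ 2)⁻¹) := by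
    rw [Measure.volume_eq_prod]
    exact integrable_inv_one_add_sq.mul_prod integrable_inv_one_add_sq
  refine hb.mono ?_ ?_
  · exact (Continuous.inv₀ (by continuity) (fun p => by positivity)).aestronglyMeasurable
  · filter_upwards with p
    rw [Real.norm_eq_abs, Real.norm_eq_abs, abs_of_pos (by positivity),
      abs_of_pos (by positivity), ← mul_inv]
    apply inv_anti₀ (by positivity)
    nlinarith [sq_nonneg p.1, sq_nonneg p.2, sq_nonneg (p.1 * p.2), sq_nonneg (p.1 ^ 2 + p.2 ^ 2)]

lemma integral_radial : (∫ r in Ioi (0:ℝ), r * ((r ^ 2 + 1) ^ 3)⁻¹) = 1 / 4 := by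
  have hderiv : ∀ x ∈ Ici (0:ℝ),
      HasDerivAt (fun y : ℝ => -((y ^ 2 + 1) ^ 2)⁻¹ / 4) (x * ((x ^ 2 + 1) ^ 3)⁻¹) x := by
    intro x _
    have h1 : HasDerivAt (fun y : ℝ => (y ^ 2 + 1) ^ 2) (2 * (x ^ 2 + 1) ^ 1 * (2 * x ^ 1 + 0)) x :=
      HasDerivAt.pow ((hasDerivAt_pow 2 x).add (hasDerivAt_const x (1:ℝ))) 2
    have h2 := (h1.inv (by positivity)).neg.div_const 4
    convert h2 using 1
    all_goals try rfl
    have hx : (0:ℝ) < x ^ 2 + 1 := by positivity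
    field_simp
    ring
  have htop : Tendsto (fun y : ℝ => -((y ^ 2 + 1) ^ 2)⁻¹ / 4) atTop (nhds (-0 / 4)) := by
    apply Tendsto.div_const
    apply Tendsto.neg
    apply Tendsto.inv_tendsto_atTop
    exact (tendsto_pow_atTop two_ne_zero).comp
      (tendsto_atTop_add_const_right _ 1 (tendsto_pow_atTop two_ne_zero))
  rw [integral_Ioi_of_hasDerivAt_of_nonneg' hderiv (fun x hx => by
    have : (0:ℝ) < x := hx
    positivity) htop]
  norm_num

lemma integral_inv_cube_prod :
    (∫ p : ℝ × ℝ, ((p.1 ^ 2 + p.2 ^ 2 + 1) ^ 3)⁻¹) = π / 2 := by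
  rw [← integral_comp_polarCoord_symm (fun p : ℝ × ℝ => ((p.1 ^ 2 + p.2 ^ 2 + 1) ^ 3)⁻¹)]
  have htarget : polarCoord.target = Ioi (0:ℝ) ×ˢ Ioo (-π) π := rfl
  have hcongr : ∀ p ∈ polarCoord.target,
      p.1 • (((polarCoord.symm p).1 ^ 2 + (polarCoord.symm p).2 ^ 2 + 1) ^ 3)⁻¹
        = (fun r : ℝ => r * ((r ^ 2 + 1) ^ 3)⁻¹) p.1 * (fun _ : ℝ => (1:ℝ)) p.2 := by
    intro p _
    simp only [polarCoord_symm_apply, smul_eq_mul, mul_one]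
    congr 3
    rw [mul_pow, mul_pow, ← mul_add]
    rw [Real.cos_sq_add_sin_sq]
    ring
  rw [setIntegral_congr_fun (polarCoord.open_target.measurableSet) hcongr, htarget,
    Measure.volume_eq_prod,
    setIntegral_prod_mul (fun r : ℝ => r * ((r ^ 2 + 1) ^ 3)⁻¹) (fun _ : ℝ => (1:ℝ))
      (Ioi (0:ℝ)) (Ioo (-π) π), integral_radial]
  simp only [integral_const, MeasurableSet.univ, Measure.restrict_apply, univ_inter,
    Real.volume_Ioo, smul_eq_mul, mul_one]
  rw [measureReal_restrict_apply MeasurableSet.univ, univ_inter,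
    Real.volume_real_Ioo_of_le (by linarith [pi_pos] : -π ≤ π)]
  ring

lemma integral_inv_cube_scaled_inner (d : ℝ) (hd : 0 < d) (c : ℝ) :
    (∫ t : ℝ, ((c + d * t ^ 2 + 1) ^ 3)⁻¹)
      = (Real.sqrt d)⁻¹ * ∫ u : ℝ, ((c + u ^ 2 + 1) ^ 3)⁻¹ := by
  have h : ∀ t : ℝ, ((c + d * t ^ 2 + 1) ^ 3)⁻¹
      = (fun u : ℝ => ((c + u ^ 2 + 1) ^ 3)⁻¹) (Real.sqrt d * t) := by
    intro t
    simp only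
    rw [mul_pow, sq_sqrt hd.le]
  simp_rw [h]
  rw [Measure.integral_comp_mul_left (fun u : ℝ => ((c + u ^ 2 + 1) ^ 3)⁻¹) (Real.sqrt d),
    smul_eq_mul, abs_of_pos (by positivity)]

lemma integral_inv_cube_scaled (d e : ℝ) (hd : 0 < d) (he : 0 < e) :
    (∫ r : ℝ, ∫ t : ℝ, ((e * r ^ 2 + d * t ^ 2 + 1) ^ 3)⁻¹)
      = π / (2 * Real.sqrt d * Real.sqrt e) := by
  have h1 : ∀ r : ℝ, (∫ t : ℝ, ((e * r ^ 2 + d * t ^ 2 + 1) ^ 3)⁻¹)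
      = (Real.sqrt d)⁻¹ *
        (fun v : ℝ => ∫ u : ℝ, ((v ^ 2 + u ^ 2 + 1) ^ 3)⁻¹) (Real.sqrt e * r) := by
    intro r
    rw [integral_inv_cube_scaled_inner d hd (e * r ^ 2)]
    simp only
    congr 1
    congr 1 with u
    rw [mul_pow, sq_sqrt he.le]
  simp_rw [h1]
  rw [integral_const_mul,
    Measure.integral_comp_mul_left
      (fun v : ℝ => ∫ u : ℝ, ((v ^ 2 + u ^ 2 + 1) ^ 3)⁻¹) (Real.sqrt e),
    smul_eq_mul, abs_of_pos (by positivity)]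
  have h2 : (∫ v : ℝ, ∫ u : ℝ, ((v ^ 2 + u ^ 2 + 1) ^ 3)⁻¹) = π / 2 := by
    rw [MeasureTheory.integral_integral (f := fun v u : ℝ => ((v ^ 2 + u ^ 2 + 1) ^ 3)⁻¹)
      (by rw [← Measure.volume_eq_prod]; exact integrable_inv_cube_prod),
      ← Measure.volume_eq_prod]
    exact integral_inv_cube_prod
  rw [h2]
  have hsd : Real.sqrt d ≠ 0 := by positivity
  have hse : Real.sqrt e ≠ 0 := by positivity
  field_simp

lemma fubini_swap_step (d e : ℝ) (hd : 0 < d) (he : 0 < e) (r : ℝ) :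
    (∫ s : ℝ, ∫ t : ℝ,
        (((e * r ^ 2 + d * t ^ 2 + 1) ^ 2 + (s - 2 * d * r * t) ^ 2) ^ 2)⁻¹)
      = π / 2 * ∫ t : ℝ, ((e * r ^ 2 + d * t ^ 2 + 1) ^ 3)⁻¹ := by
  have hA : ∀ t : ℝ, 0 < e * r ^ 2 + d * t ^ 2 + 1 := fun t => by positivity
  have hnorm : ∀ s t : ℝ,
      ‖(((e * r ^ 2 + d * t ^ 2 + 1) ^ 2 + (s - 2 * d * r * t) ^ 2) ^ 2)⁻¹‖
        = (((e * r ^ 2 + d * t ^ 2 + 1) ^ 2 + (s - 2 * d * r * t) ^ 2) ^ 2)⁻¹ := by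
    intro s t
    exact norm_of_nonneg (by positivity)
  have hinner : ∀ t : ℝ, (∫ s : ℝ,
      (((e * r ^ 2 + d * t ^ 2 + 1) ^ 2 + (s - 2 * d * r * t) ^ 2) ^ 2)⁻¹)
        = π / (2 * (e * r ^ 2 + d * t ^ 2 + 1) ^ 3) :=
    fun t => integral_lorentz_sq _ _ (hA t)
  have hmeas : AEStronglyMeasurable (Function.uncurry fun s t : ℝ =>
      (((e * r ^ 2 + d * t ^ 2 + 1) ^ 2 + (s - 2 * d * r * t) ^ 2) ^ 2)⁻¹)
      (volume.prod volume) := by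
    apply Continuous.aestronglyMeasurable
    apply Continuous.inv₀
    · apply Continuous.pow
      apply Continuous.add
      · fun_prop
      · fun_prop
    · intro q
      have := hA q.2
      positivity
  have hbound : Integrable (fun t : ℝ => π / (2 * (e * r ^ 2 + d * t ^ 2 + 1) ^ 3)) := by
    have hb : Integrable (fun t : ℝ => π / 2 * (1 + (Real.sqrt d * t) ^ 2)⁻¹) :=
      (integrable_inv_one_add_sq.comp_mul_left' (by positivity : Real.sqrt d ≠ 0)).const_mul _
    refine hb.mono ?_ ?_
    · apply Continuous.aestronglyMeasurable
      refine Continuous.div continuous_const (by fun_prop) fun t => ?_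
      exact (by positivity : (0:ℝ) < 2 * (e * r ^ 2 + d * t ^ 2 + 1) ^ 3).ne'
    · filter_upwards with t
      have hsq : (Real.sqrt d * t) ^ 2 = d * t ^ 2 := by
        rw [mul_pow, sq_sqrt hd.le]
      rw [Real.norm_eq_abs, Real.norm_eq_abs, abs_of_pos (by positivity),
        abs_of_pos (by positivity), hsq]
      have h1 : (1:ℝ) ≤ e * r ^ 2 + d * t ^ 2 + 1 := by nlinarith [sq_nonneg r, sq_nonneg t]
      have h2 : (1:ℝ) + d * t ^ 2 ≤ (e * r ^ 2 + d * t ^ 2 + 1) ^ 3 := by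
        have h3 : (e * r ^ 2 + d * t ^ 2 + 1) ^ 1 ≤ (e * r ^ 2 + d * t ^ 2 + 1) ^ 3 :=
          pow_le_pow_right₀ h1 (by norm_num)
        rw [pow_one] at h3
        nlinarith [sq_nonneg r]
      rw [show π / 2 * (1 + d * t ^ 2)⁻¹ = π / (2 * (1 + d * t ^ 2)) by
        rw [div_eq_mul_inv, div_eq_mul_inv, mul_inv, mul_assoc]]
      gcongr
  have hint : Integrable (Function.uncurry fun s t : ℝ =>
      (((e * r ^ 2 + d * t ^ 2 + 1) ^ 2 + (s - 2 * d * r * t) ^ 2) ^ 2)⁻¹)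
      (volume.prod volume) := by
    rw [integrable_prod_iff' hmeas]
    refine ⟨Eventually.of_forall fun t => ?_, ?_⟩
    · simp only [Function.uncurry_apply_pair]
      exact integrable_lorentz_sq _ (2 * d * r * t) (hA t)
    · simp only [Function.uncurry_apply_pair]
      refine hbound.congr (Eventually.of_forall fun t => ?_)
      calc π / (2 * (e * r ^ 2 + d * t ^ 2 + 1) ^ 3)
          = ∫ s : ℝ, (((e * r ^ 2 + d * t ^ 2 + 1) ^ 2 + (s - 2 * d * r * t) ^ 2) ^ 2)⁻¹ :=
            (hinner t).symm
        _ = ∫ s : ℝ, ‖(((e * r ^ 2 + d * t ^ 2 + 1) ^ 2 + (s - 2 * d * r * t) ^ 2) ^ 2)⁻¹‖ := by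
            congr 1 with s
            exact (hnorm s t).symm
  rw [MeasureTheory.integral_integral_swap hint]
  rw [← integral_const_mul]
  congr 1 with t
  rw [hinner t, div_eq_mul_inv, div_eq_mul_inv, mul_inv, mul_assoc]

theorem kernel_norm_at_unit_height (β : ℝ) (hβ0 : 0 ≤ β) (hβ1 : β < 1) :
    (1 / Real.pi ^ 4) *
        (∫ r : ℝ, ∫ s : ℝ, ∫ t : ℝ,
          1 / ‖(((1 + β) * r ^ 2 + (1 - β) * t ^ 2 + 1 : ℝ) : ℂ)
              + Complex.I * ((s - 2 * (1 - β) * r * t : ℝ) : ℂ)‖ ^ 4) =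
      1 / (4 * Real.pi ^ 2 * Real.sqrt (1 - β ^ 2)) := by
  have hd : (0:ℝ) < 1 - β := by linarith
  have he : (0:ℝ) < 1 + β := by linarith
  have habs : ∀ a b : ℝ,
      1 / ‖(a : ℂ) + Complex.I * (b : ℂ)‖ ^ 4 = ((a ^ 2 + b ^ 2) ^ 2)⁻¹ := by
    intro a b
    have h1 : ‖(a : ℂ) + Complex.I * (b : ℂ)‖ ^ 2 = a ^ 2 + b ^ 2 := by
      rw [Complex.sq_norm]
      simp [Complex.normSq_apply]
      ring
    rw [one_div, show (4:ℕ) = 2 * 2 from rfl, pow_mul, h1]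
  simp_rw [habs]
  have hswap : ∀ r : ℝ, (∫ s : ℝ, ∫ t : ℝ,
      ((((1 + β) * r ^ 2 + (1 - β) * t ^ 2 + 1) ^ 2 + (s - 2 * (1 - β) * r * t) ^ 2) ^ 2)⁻¹)
        = π / 2 * ∫ t : ℝ, (((1 + β) * r ^ 2 + (1 - β) * t ^ 2 + 1) ^ 3)⁻¹ :=
    fun r => fubini_swap_step (1 - β) (1 + β) hd he r
  simp_rw [hswap]
  rw [integral_const_mul, integral_inv_cube_scaled (1 - β) (1 + β) hd he]
  have hs : Real.sqrt (1 - β) * Real.sqrt (1 + β) = Real.sqrt (1 - β ^ 2) := by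
    rw [← Real.sqrt_mul hd.le]
    congr 1
    ring
  have hsd : Real.sqrt (1 - β) ≠ 0 := by positivity
  have hse : Real.sqrt (1 + β) ≠ 0 := by positivity
  have hspos : (0:ℝ) < Real.sqrt (1 - β ^ 2) := by
    rw [← hs]
    positivity
  rw [← hs]
  field_simp
  ring
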